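/- Let d ≥ 1 and let D ⊂ ℝ^d be a nonempty bounded open set. Let a, b > 0 and ϱ > −d satisfy a + ϱ + b = 0. Then there exists a constant C = C(d, a, b, ϱ) such that for all x, y ∈ D with x ≠ y: ∫_D ∫_D |y−z|^{a−d} |z−w|^{ϱ} |w−x|^{b−d} dz dw ≤ C (1 + log(diam(D)/|x−y|)). -/

import Mathlib

open MeasureTheory Measure Metric Set Real
open scoped ENNReal

noncomputable section

namespace DoubleRiesz

local notation "dimE" => Module.finrank ℝ

variable {E : Type*} [NormedAddCommGroup E] [NormedSpace ℝ E] [MeasurableSpace E] [BorelSpace E]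
  [FiniteDimensional ℝ E] [Nontrivial E] (μ : Measure E) [μ.IsAddHaarMeasure]

lemma my_lintegral_fun_norm (g : ℝ → ℝ≥0∞) (hg : Measurable g) :
    ∫⁻ x, g ‖x‖ ∂μ = (dimE E) * μ (ball 0 1) *
      ∫⁻ r in Ioi (0:ℝ), ENNReal.ofReal (r ^ (dimE E - 1)) * g r := by
  have hm : Measurable fun p : sphere (0:E) 1 × Ioi (0:ℝ) => g ↑p.2 :=
    hg.comp (measurable_subtype_coe.comp measurable_snd)
  have hm2 : Measurable fun r : Ioi (0:ℝ) => g ↑r := hg.comp measurable_subtype_coe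
  have hd : Measurable fun r : Ioi (0:ℝ) => ENNReal.ofReal (↑r ^ (dimE E - 1)) :=
    (measurable_subtype_coe.pow_const _).ennreal_ofReal
  calc
    ∫⁻ x, g ‖x‖ ∂μ = ∫⁻ x : ({(0:E)}ᶜ : Set E), g ‖x.1‖ ∂(μ.comap (↑)) := by
      rw [lintegral_subtype_comap (measurableSet_singleton _).compl fun x ↦ g ‖x‖,
        restrict_compl_singleton]
    _ = ∫⁻ p : sphere (0:E) 1 × Ioi (0:ℝ), g p.2 ∂(μ.toSphere.prod (volumeIoiPow (dimE E - 1))) := by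
      rw [← (μ.measurePreserving_homeomorphUnitSphereProd).lintegral_comp hm]
      exact lintegral_congr fun x ↦ by simp
    _ = μ.toSphere univ * ∫⁻ r : Ioi (0:ℝ), g r ∂(volumeIoiPow (dimE E - 1)) := by
      rw [lintegral_prod _ hm.aemeasurable]
      simp [lintegral_const, mul_comm]
    _ = _ := by
      rw [toSphere_apply_univ, volumeIoiPow, lintegral_withDensity_eq_lintegral_mul _
        (f := fun r : Ioi (0:ℝ) => ENNReal.ofReal (↑r ^ (dimE E - 1))) hd hm2]
      simp only [Pi.mul_apply]
      rw [lintegral_subtype_comap measurableSet_Ioi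
        (fun r : ℝ => ENNReal.ofReal (r ^ (dimE E - 1)) * g r)]

section Euclid

variable {d : ℕ}

local notation "𝔼" => EuclideanSpace ℝ (Fin d)

/-- the dimensional constant -/
def kappa (d : ℕ) : ℝ≥0∞ := d * volume (ball (0 : EuclideanSpace ℝ (Fin d)) 1)

lemma kappa_ne_top : kappa d ≠ ∞ :=
  ENNReal.mul_ne_top (ENNReal.natCast_ne_top d) measure_ball_lt_top.ne

lemma kappa_pos (hd : 0 < d) : 0 < kappa d := by
  have h1 : ((d:ℝ≥0∞)) ≠ 0 := by exact_mod_cast hd.ne'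
  have h2 : volume (ball (0 : EuclideanSpace ℝ (Fin d)) 1) ≠ 0 :=
    (measure_ball_pos _ _ one_pos).ne'
  exact pos_iff_ne_zero.2 (mul_ne_zero h1 h2)

lemma polar_euclid (hd : 0 < d) (g : ℝ → ℝ≥0∞) (hg : Measurable g) :
    ∫⁻ x : 𝔼, g ‖x‖ = kappa d * ∫⁻ r in Ioi (0:ℝ), ENNReal.ofReal (r ^ (d - 1)) * g r := by
  haveI : Nontrivial 𝔼 := Module.nontrivial_of_finrank_pos
    (R := ℝ) (by rw [finrank_euclideanSpace_fin]; exact hd)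
  rw [my_lintegral_fun_norm _ g hg, kappa, finrank_euclideanSpace_fin]

lemma radial_center (hd : 0 < d) (c : 𝔼) (g : ℝ → ℝ≥0∞) (hg : Measurable g) :
    ∫⁻ x : 𝔼, g ‖x - c‖ = kappa d * ∫⁻ r in Ioi (0:ℝ), ENNReal.ofReal (r ^ (d - 1)) * g r := by
  rw [← polar_euclid hd g hg]
  exact lintegral_sub_right_eq_self (fun x : 𝔼 => g ‖x‖) c

lemma radial_set (hd : 0 < d) (c : 𝔼) {s : Set ℝ} (hs : MeasurableSet s)
    (f : ℝ → ℝ≥0∞) (hf : Measurable f) :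
    ∫⁻ x in {x : 𝔼 | ‖x - c‖ ∈ s}, f ‖x - c‖
      = kappa d * ∫⁻ r in s ∩ Ioi (0:ℝ), ENNReal.ofReal (r ^ (d - 1)) * f r := by
  have hms : MeasurableSet {x : 𝔼 | ‖x - c‖ ∈ s} :=
    ((measurable_id.sub_const c).norm) hs
  rw [← lintegral_indicator hms]
  have : ∀ x : 𝔼, {x : 𝔼 | ‖x - c‖ ∈ s}.indicator (fun x => f ‖x - c‖) x
      = s.indicator f ‖x - c‖ := by
    intro x
    by_cases h : ‖x - c‖ ∈ s <;> simp [indicator_apply, h]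
  rw [lintegral_congr this, radial_center hd c _ (hf.indicator hs)]
  congr 1
  have : ∀ r : ℝ, ENNReal.ofReal (r ^ (d - 1)) * s.indicator f r
      = s.indicator (fun r => ENNReal.ofReal (r ^ (d - 1)) * f r) r := by
    intro r; by_cases h : r ∈ s <;> simp [indicator_apply, h]
  rw [lintegral_congr this, lintegral_indicator hs, Measure.restrict_restrict hs]

lemma rpow_profile (hd : 0 < d) {p : ℝ} {T : Set ℝ} (hT : T ⊆ Ioi 0) (hTm : MeasurableSet T)
    (hi : IntegrableOn (fun r : ℝ => r ^ ((d:ℝ) - 1 + p)) T) :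
    ∫⁻ r in T, ENNReal.ofReal (r ^ (d - 1)) * ENNReal.ofReal (r ^ p)
      = ENNReal.ofReal (∫ r in T, r ^ ((d:ℝ) - 1 + p)) := by
  rw [ofReal_integral_eq_lintegral_ofReal hi
    ((ae_restrict_iff' hTm).2 (ae_of_all _ fun r hr => rpow_nonneg (le_of_lt (hT hr)) _))]
  refine setLIntegral_congr_fun hTm (fun r hr => ?_)
  have hr0 : (0:ℝ) < r := hT hr
  rw [← ENNReal.ofReal_mul (by positivity), ← Real.rpow_natCast r (d - 1),
    ← Real.rpow_add hr0]
  congr 2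
  push_cast [Nat.cast_sub hd]
  ring

lemma ball_rpow_int (hd : 0 < d) {p : ℝ} (hp : -(d:ℝ) < p) (c : 𝔼) {ρ : ℝ} (hρ : 0 < ρ) :
    ∫⁻ x in ball c ρ, ENNReal.ofReal (‖x - c‖ ^ p)
      = kappa d * ENNReal.ofReal (ρ ^ ((d:ℝ) + p) / ((d:ℝ) + p)) := by
  have hq : (-1:ℝ) < (d:ℝ) - 1 + p := by linarith
  have hball : ball c ρ = {x : 𝔼 | ‖x - c‖ ∈ Iio ρ} := by
    ext x; simp [mem_ball_iff_norm, dist_eq_norm]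
  rw [hball]
  have hrad := radial_set hd c (s := Iio ρ) measurableSet_Iio (fun r => ENNReal.ofReal (r ^ p)) (by fun_prop)
  rw [show (∫⁻ x in {x : 𝔼 | ‖x - c‖ ∈ Iio ρ}, ENNReal.ofReal (‖x - c‖ ^ p))
      = kappa d * ∫⁻ r in Iio ρ ∩ Ioi (0:ℝ), ENNReal.ofReal (r ^ (d - 1)) *
        ENNReal.ofReal (r ^ p) from hrad]
  have hseteq : Iio ρ ∩ Ioi (0:ℝ) = Ioo 0 ρ := by ext r; simp [and_comm]
  rw [hseteq, rpow_profile hd (fun r hr => hr.1) measurableSet_Ioo ?_]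
  · congr 1
    rw [restrict_congr_set Ioo_ae_eq_Ioc, ← intervalIntegral.integral_of_le hρ.le,
      integral_rpow (Or.inl hq)]
    rw [Real.zero_rpow (by linarith)]
    congr 1 <;> ring
  · have : IntegrableOn (fun r : ℝ => r ^ ((d:ℝ) - 1 + p)) (Ioc 0 ρ) := by
      rw [← intervalIntegrable_iff_integrableOn_Ioc_of_le hρ.le]
      exact intervalIntegral.intervalIntegrable_rpow' hq
    exact this.mono_set Ioo_subset_Ioc_self

lemma compl_rpow_int (hd : 0 < d) {p : ℝ} (hp : p < -(d:ℝ)) (c : 𝔼) {ρ : ℝ} (hρ : 0 < ρ) :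
    ∫⁻ x in (ball c ρ)ᶜ, ENNReal.ofReal (‖x - c‖ ^ p)
      = kappa d * ENNReal.ofReal (-ρ ^ ((d:ℝ) + p) / ((d:ℝ) + p)) := by
  have hq : (d:ℝ) - 1 + p < -1 := by linarith
  have hball : (ball c ρ)ᶜ = {x : 𝔼 | ‖x - c‖ ∈ Ici ρ} := by
    ext x; simp [mem_ball_iff_norm, dist_eq_norm, not_lt]
  rw [hball]
  have hrad := radial_set hd c (s := Ici ρ) measurableSet_Ici (fun r => ENNReal.ofReal (r ^ p)) (by fun_prop)
  rw [show (∫⁻ x in {x : 𝔼 | ‖x - c‖ ∈ Ici ρ}, ENNReal.ofReal (‖x - c‖ ^ p))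
      = kappa d * ∫⁻ r in Ici ρ ∩ Ioi (0:ℝ), ENNReal.ofReal (r ^ (d - 1)) *
        ENNReal.ofReal (r ^ p) from hrad]
  have hseteq : Ici ρ ∩ Ioi (0:ℝ) = Ici ρ := by
    apply inter_eq_left.2; intro r hr; exact lt_of_lt_of_le hρ hr
  rw [hseteq, restrict_congr_set Ioi_ae_eq_Ici.symm,
    rpow_profile hd (T := Ioi ρ) (fun r hr => lt_trans hρ hr) measurableSet_Ioi
      (integrableOn_Ioi_rpow_of_lt hq hρ)]
  congr 1
  rw [integral_Ioi_rpow_of_lt hq hρ]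
  congr 1 <;> ring

lemma annulus_int (hd : 0 < d) (c : 𝔼) {s R : ℝ} (hs : 0 < s) (hR : s ≤ R) :
    ∫⁻ x in closedBall c R \ ball c s, ENNReal.ofReal (‖x - c‖ ^ (-(d:ℝ)))
      = kappa d * ENNReal.ofReal (Real.log (R / s)) := by
  have hball : closedBall c R \ ball c s = {x : 𝔼 | ‖x - c‖ ∈ Icc s R} := by
    ext x; simp [mem_ball_iff_norm, mem_closedBall_iff_norm, dist_eq_norm, not_lt, and_comm]
  rw [hball]
  have hrad := radial_set hd c (s := Icc s R) measurableSet_Icc (fun r => ENNReal.ofReal (r ^ (-(d:ℝ)))) (by fun_prop)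
  rw [show (∫⁻ x in {x : 𝔼 | ‖x - c‖ ∈ Icc s R}, ENNReal.ofReal (‖x - c‖ ^ (-(d:ℝ))))
      = kappa d * ∫⁻ r in Icc s R ∩ Ioi (0:ℝ), ENNReal.ofReal (r ^ (d - 1)) *
        ENNReal.ofReal (r ^ (-(d:ℝ))) from hrad]
  have hseteq : Icc s R ∩ Ioi (0:ℝ) = Icc s R := by
    apply inter_eq_left.2; intro r hr; exact lt_of_lt_of_le hs hr.1
  have hIoc : IntegrableOn (fun r : ℝ => r ^ ((d:ℝ) - 1 + -(d:ℝ))) (Ioc s R) := by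
    rw [← intervalIntegrable_iff_integrableOn_Ioc_of_le hR]
    apply ContinuousOn.intervalIntegrable
    apply ContinuousOn.rpow_const (by fun_prop)
    intro r hr
    rw [uIcc_of_le hR] at hr
    exact Or.inl (ne_of_gt (lt_of_lt_of_le hs hr.1))
  rw [hseteq, restrict_congr_set Ioc_ae_eq_Icc.symm,
    rpow_profile hd (fun r hr => lt_of_lt_of_le hs hr.1.le) measurableSet_Ioc hIoc]
  congr 1
  rw [← intervalIntegral.integral_of_le hR]
  have : ∀ r ∈ uIcc s R, r ^ ((d:ℝ) - 1 + -(d:ℝ)) = r⁻¹ := by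
    intro r hr
    rw [uIcc_of_le hR] at hr
    have : (d:ℝ) - 1 + -(d:ℝ) = -1 := by ring
    rw [this, Real.rpow_neg_one]
  rw [intervalIntegral.integral_congr this, integral_inv_of_pos hs
    (lt_of_lt_of_le hs hR)]

lemma comp_rpow (hd : 0 < d) {α β : ℝ} (hα0 : 0 < α) (hβ0 : 0 < β) (hαβ : α + β < d) :
    ∃ K : ℝ, 0 < K ∧ ∀ u v : 𝔼, u ≠ v →
      ∫⁻ z : 𝔼, ENNReal.ofReal (‖u - z‖ ^ (α - d)) * ENNReal.ofReal (‖z - v‖ ^ (β - d))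
        ≤ ENNReal.ofReal K * ENNReal.ofReal (‖u - v‖ ^ (α + β - d)) := by
  set κR : ℝ := (kappa d).toReal with hκRdef
  have hκR : 0 < κR := ENNReal.toReal_pos (kappa_pos hd).ne' kappa_ne_top
  have hκ : kappa d = ENNReal.ofReal κR := (ENNReal.ofReal_toReal kappa_ne_top).symm
  set e : ℝ := α + β - d with he
  have he0 : e < 0 := by simp only [he]; linarith
  set M : ℝ := κR / α + κR / β + 4 ^ ((d:ℝ) - β) * (κR / ((d:ℝ) - α - β)) with hM
  have hM0 : 0 < M := by
    have h1 : 0 < κR / α := div_pos hκR hα0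
    have h2 : 0 < κR / β := div_pos hκR hβ0
    have h3 : 0 < (4:ℝ) ^ ((d:ℝ) - β) * (κR / ((d:ℝ) - α - β)) :=
      mul_pos (rpow_pos_of_pos (by norm_num) _) (div_pos hκR (by linarith))
    rw [hM]; exact add_pos (add_pos h1 h2) h3
  refine ⟨M * 2 ^ (-e), mul_pos hM0 (rpow_pos_of_pos (by norm_num) _), fun u v huv => ?_⟩
  set r : ℝ := ‖u - v‖ with hr
  have hr0 : 0 < r := by simpa [hr] using sub_ne_zero.2 huv
  have hr2 : 0 < r / 2 := by positivity
  set F : 𝔼 → ℝ≥0∞ := fun z => ENNReal.ofReal (‖u - z‖ ^ (α - d)) with hF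
  set G : 𝔼 → ℝ≥0∞ := fun z => ENNReal.ofReal (‖z - v‖ ^ (β - d)) with hG
  set B₁ : Set 𝔼 := ball u (r / 2)
  set B₂ : Set 𝔼 := ball v (r / 2)
  -- region 1
  have h1 : ∫⁻ z in B₁, F z * G z ≤ ENNReal.ofReal (κR / α * (r / 2) ^ e) := by
    have hstep : ∀ z ∈ B₁, F z * G z ≤ F z * ENNReal.ofReal ((r / 2) ^ (β - d)) := by
      intro z hz
      have hzv : r / 2 ≤ ‖z - v‖ := by
        have h1 : ‖u - z‖ < r / 2 := by
          rw [norm_sub_rev]; simpa [B₁, mem_ball_iff_norm, dist_eq_norm] using hz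
        have h2 : r ≤ ‖u - z‖ + ‖z - v‖ := by
          have := norm_sub_le_norm_sub_add_norm_sub u z v
          simpa [hr] using this
        linarith
      exact mul_le_mul_right (ENNReal.ofReal_le_ofReal
        (rpow_le_rpow_of_nonpos hr2 hzv (by linarith))) _
    calc ∫⁻ z in B₁, F z * G z ≤ ∫⁻ z in B₁, F z * ENNReal.ofReal ((r / 2) ^ (β - d)) :=
          setLIntegral_mono' measurableSet_ball hstep
      _ = (∫⁻ z in B₁, F z) * ENNReal.ofReal ((r / 2) ^ (β - d)) :=
          lintegral_mul_const' _ _ ENNReal.ofReal_ne_top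
      _ = (∫⁻ z in B₁, ENNReal.ofReal (‖z - u‖ ^ (α - d))) * ENNReal.ofReal ((r / 2) ^ (β - d)) := by
          congr 1
          exact lintegral_congr fun z => by rw [hF, norm_sub_rev]
      _ = kappa d * ENNReal.ofReal ((r / 2) ^ α / α) * ENNReal.ofReal ((r / 2) ^ (β - d)) := by
          rw [ball_rpow_int hd (by linarith) u hr2, show (d:ℝ) + (α - d) = α from by ring]
      _ = ENNReal.ofReal (κR * ((r / 2) ^ α / α) * (r / 2) ^ (β - d)) := by
          rw [hκ, ← ENNReal.ofReal_mul hκR.le, ← ENNReal.ofReal_mul (by positivity)]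
      _ = ENNReal.ofReal (κR / α * (r / 2) ^ e) := by
          congr 1
          have hsplit : (r/2) ^ α * (r/2) ^ (β - d) = (r/2) ^ e := by
            rw [← Real.rpow_add hr2]; congr 1; rw [he]; ring
          rw [← hsplit]; ring
  -- region 2
  have h2 : ∫⁻ z in B₂, F z * G z ≤ ENNReal.ofReal (κR / β * (r / 2) ^ e) := by
    have hstep : ∀ z ∈ B₂, F z * G z ≤ ENNReal.ofReal ((r / 2) ^ (α - d)) * G z := by
      intro z hz
      have h1 : ‖z - v‖ < r / 2 := by simpa [B₂, mem_ball_iff_norm, dist_eq_norm] using hz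
      have h2 : r ≤ ‖u - z‖ + ‖z - v‖ := by
        have := norm_sub_le_norm_sub_add_norm_sub u z v
        simpa [hr] using this
      have hzu : r / 2 ≤ ‖u - z‖ := by linarith
      exact mul_le_mul_left (ENNReal.ofReal_le_ofReal
        (rpow_le_rpow_of_nonpos hr2 hzu (by linarith))) _
    calc ∫⁻ z in B₂, F z * G z ≤ ∫⁻ z in B₂, ENNReal.ofReal ((r / 2) ^ (α - d)) * G z :=
          setLIntegral_mono' measurableSet_ball hstep
      _ = ENNReal.ofReal ((r / 2) ^ (α - d)) * ∫⁻ z in B₂, G z :=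
          lintegral_const_mul' _ _ ENNReal.ofReal_ne_top
      _ = ENNReal.ofReal ((r / 2) ^ (α - d)) * (kappa d * ENNReal.ofReal ((r / 2) ^ β / β)) := by
          rw [hG, ball_rpow_int hd (by linarith) v hr2,
            show (d:ℝ) + (β - d) = β from by ring]
      _ = ENNReal.ofReal ((r / 2) ^ (α - d) * (κR * ((r / 2) ^ β / β))) := by
          rw [hκ, ← ENNReal.ofReal_mul (by positivity), ← ENNReal.ofReal_mul (by positivity)]
      _ = ENNReal.ofReal (κR / β * (r / 2) ^ e) := by
          congr 1
          have hsplit : (r/2) ^ (α - d) * (r/2) ^ β = (r/2) ^ e := by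
            rw [← Real.rpow_add hr2]; congr 1; rw [he]; ring
          rw [← hsplit]; ring
  -- region 3
  set A : Set 𝔼 := B₁ᶜ ∩ B₂ᶜ with hA
  have h3 : ∫⁻ z in A, F z * G z
      ≤ ENNReal.ofReal (4 ^ ((d:ℝ) - β) * (κR / ((d:ℝ) - α - β)) * (r / 2) ^ e) := by
    have hp : α + β - 2 * d < -(d:ℝ) := by linarith
    have hstep : ∀ z ∈ A, F z * G z
        ≤ ENNReal.ofReal (4 ^ ((d:ℝ) - β)) * ENNReal.ofReal (‖z - u‖ ^ (α + β - 2 * d)) := by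
      intro z hz
      have hzu : r / 2 ≤ ‖z - u‖ := by
        have := hz.1
        simp only [B₁, mem_compl_iff, mem_ball, not_lt, dist_eq_norm] at this
        exact this
      have hzv : r / 2 ≤ ‖z - v‖ := by
        have := hz.2
        simp only [B₂, mem_compl_iff, mem_ball, not_lt, dist_eq_norm] at this
        exact this
      have hzu0 : 0 < ‖z - u‖ := lt_of_lt_of_le hr2 hzu
      have hq : ‖z - u‖ / 4 ≤ ‖z - v‖ := by
        by_cases hcase : ‖z - u‖ ≤ 2 * r
        · linarith
        · have htri : ‖z - u‖ ≤ ‖z - v‖ + ‖v - u‖ := norm_sub_le_norm_sub_add_norm_sub z v u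
          have hvu : ‖v - u‖ = r := by rw [hr]; exact norm_sub_rev v u
          linarith
      have hGle : G z ≤ ENNReal.ofReal ((‖z - u‖ / 4) ^ (β - (d:ℝ))) :=
        ENNReal.ofReal_le_ofReal
          (rpow_le_rpow_of_nonpos (by positivity) hq (by linarith))
      have hdiv : (‖z - u‖ / 4) ^ (β - (d:ℝ)) = ‖z - u‖ ^ (β - (d:ℝ)) * 4 ^ ((d:ℝ) - β) := by
        have h4 : ((4:ℝ) ^ (β - (d:ℝ)))⁻¹ = 4 ^ ((d:ℝ) - β) := by
          rw [← Real.rpow_neg (by norm_num : (0:ℝ) ≤ 4)]; congr 1; ring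
        rw [div_rpow (norm_nonneg _) (by norm_num : (0:ℝ) ≤ 4), div_eq_mul_inv, h4]
      calc F z * G z ≤ F z * ENNReal.ofReal ((‖z - u‖ / 4) ^ (β - (d:ℝ))) :=
            mul_le_mul_right hGle _
        _ = ENNReal.ofReal (‖z - u‖ ^ (α - (d:ℝ)) * (‖z - u‖ ^ (β - (d:ℝ)) * 4 ^ ((d:ℝ) - β))) := by
            simp only [hF]
            rw [norm_sub_rev u z, hdiv, ← ENNReal.ofReal_mul (by positivity)]
        _ = ENNReal.ofReal (4 ^ ((d:ℝ) - β)) * ENNReal.ofReal (‖z - u‖ ^ (α + β - 2 * d)) := by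
            rw [← ENNReal.ofReal_mul (by positivity)]
            congr 1
            rw [show ‖z - u‖ ^ (α - (d:ℝ)) * (‖z - u‖ ^ (β - (d:ℝ)) * 4 ^ ((d:ℝ) - β))
                = 4 ^ ((d:ℝ) - β) * (‖z - u‖ ^ (α - (d:ℝ)) * ‖z - u‖ ^ (β - (d:ℝ))) from by ring,
              ← Real.rpow_add hzu0]
            congr 2
            ring
    calc ∫⁻ z in A, F z * G z
        ≤ ∫⁻ z in A, ENNReal.ofReal (4 ^ ((d:ℝ) - β))
            * ENNReal.ofReal (‖z - u‖ ^ (α + β - 2 * d)) :=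
          setLIntegral_mono' ((measurableSet_ball.compl).inter measurableSet_ball.compl) hstep
      _ ≤ ∫⁻ z in B₁ᶜ, ENNReal.ofReal (4 ^ ((d:ℝ) - β))
            * ENNReal.ofReal (‖z - u‖ ^ (α + β - 2 * d)) :=
          lintegral_mono_set inter_subset_left
      _ = ENNReal.ofReal (4 ^ ((d:ℝ) - β))
            * ∫⁻ z in B₁ᶜ, ENNReal.ofReal (‖z - u‖ ^ (α + β - 2 * d)) :=
          lintegral_const_mul' _ _ ENNReal.ofReal_ne_top
      _ = ENNReal.ofReal (4 ^ ((d:ℝ) - β))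
            * (kappa d * ENNReal.ofReal (-(r / 2) ^ ((d:ℝ) + (α + β - 2 * d))
                / ((d:ℝ) + (α + β - 2 * d)))) := by
          rw [compl_rpow_int hd hp u hr2]
      _ = ENNReal.ofReal (4 ^ ((d:ℝ) - β) * (κR * ((r / 2) ^ e / ((d:ℝ) - α - β)))) := by
          rw [show (d:ℝ) + (α + β - 2 * d) = e from by rw [he]; ring,
            show -(r / 2) ^ e / e = (r / 2) ^ e / ((d:ℝ) - α - β) from by
              rw [show e = -((d:ℝ) - α - β) from by rw [he]; ring]
              rw [div_neg, neg_div, neg_neg],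
            hκ, ← ENNReal.ofReal_mul hκR.le, ← ENNReal.ofReal_mul (by positivity)]
      _ = ENNReal.ofReal (4 ^ ((d:ℝ) - β) * (κR / ((d:ℝ) - α - β)) * (r / 2) ^ e) := by
          congr 1; ring
  -- assemble
  have hcover : (univ : Set 𝔼) ⊆ B₁ ∪ (B₂ ∪ A) := by
    intro z _
    by_cases hz₁ : z ∈ B₁
    · exact Or.inl hz₁
    by_cases hz₂ : z ∈ B₂
    · exact Or.inr (Or.inl hz₂)
    exact Or.inr (Or.inr ⟨hz₁, hz₂⟩)
  have hnn1 : (0:ℝ) ≤ κR / α * (r / 2) ^ e := by positivity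
  have hnn2 : (0:ℝ) ≤ κR / β * (r / 2) ^ e := by positivity
  have hnn3 : (0:ℝ) ≤ 4 ^ ((d:ℝ) - β) * (κR / ((d:ℝ) - α - β)) * (r / 2) ^ e := by
    have h0 : (0:ℝ) ≤ κR / ((d:ℝ) - α - β) := (div_pos hκR (by linarith)).le
    positivity
  calc ∫⁻ z : 𝔼, F z * G z = ∫⁻ z in (univ : Set 𝔼), F z * G z := (setLIntegral_univ _).symm
    _ ≤ ∫⁻ z in B₁ ∪ (B₂ ∪ A), F z * G z := lintegral_mono_set hcover
    _ ≤ (∫⁻ z in B₁, F z * G z) + ∫⁻ z in B₂ ∪ A, F z * G z := lintegral_union_le _ _ _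
    _ ≤ (∫⁻ z in B₁, F z * G z) + ((∫⁻ z in B₂, F z * G z) + ∫⁻ z in A, F z * G z) :=
        add_le_add_right (lintegral_union_le _ _ _) _
    _ ≤ ENNReal.ofReal (κR / α * (r / 2) ^ e) + (ENNReal.ofReal (κR / β * (r / 2) ^ e)
          + ENNReal.ofReal (4 ^ ((d:ℝ) - β) * (κR / ((d:ℝ) - α - β)) * (r / 2) ^ e)) :=
        add_le_add h1 (add_le_add h2 h3)
    _ = ENNReal.ofReal (M * (r / 2) ^ e) := by
        rw [← ENNReal.ofReal_add hnn2 hnn3, ← ENNReal.ofReal_add hnn1 (by linarith)]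
        congr 1
        rw [hM]; ring
    _ = ENNReal.ofReal (M * 2 ^ (-e) * r ^ e) := by
        congr 1
        rw [show r / 2 = r * (2:ℝ)⁻¹ from by ring, Real.mul_rpow hr0.le (by norm_num),
          Real.inv_rpow (by norm_num : (0:ℝ) ≤ 2), ← Real.rpow_neg (by norm_num : (0:ℝ) ≤ 2)]
        ring
    _ = ENNReal.ofReal (M * 2 ^ (-e)) * ENNReal.ofReal (r ^ e) :=
        ENNReal.ofReal_mul (by positivity)
lemma outer_log (hd : 0 < d) {b : ℝ} (hb0 : 0 < b) (hbd : b < d) :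
    ∃ C : ℝ, 0 < C ∧ ∀ D : Set 𝔼, Bornology.IsBounded D →
      ∀ x ∈ D, ∀ y ∈ D, x ≠ y →
        ∫⁻ w in D, ENNReal.ofReal (‖y - w‖ ^ (-b)) * ENNReal.ofReal (‖w - x‖ ^ (b - d))
          ≤ ENNReal.ofReal (C * (1 + Real.log (diam D / ‖x - y‖))) := by
  set κR : ℝ := (kappa d).toReal with hκRdef
  have hκR : 0 < κR := ENNReal.toReal_pos (kappa_pos hd).ne' kappa_ne_top
  have hκ : kappa d = ENNReal.ofReal κR := (ENNReal.ofReal_toReal kappa_ne_top).symm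
  set c₁ : ℝ := κR / b + κR / ((d:ℝ) - b) + 4 ^ b * κR * Real.log 2 with hc₁
  set c₂ : ℝ := 4 ^ b * κR with hc₂
  have hc₂0 : 0 < c₂ := by rw [hc₂]; positivity
  have hc₁0 : 0 < c₁ := by
    have h1 : 0 < κR / b := div_pos hκR hb0
    have h2 : 0 < κR / ((d:ℝ) - b) := div_pos hκR (by linarith)
    have h3 : 0 ≤ 4 ^ b * κR * Real.log 2 := by
      have := Real.log_nonneg (by norm_num : (1:ℝ) ≤ 2)
      positivity
    rw [hc₁]; linarith
  refine ⟨c₁ + c₂, by linarith, fun D hD x hx y hy hxy => ?_⟩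
  set r : ℝ := ‖x - y‖ with hr
  have hr0 : 0 < r := by simpa [hr] using sub_ne_zero.2 hxy
  have hr2 : 0 < r / 2 := by positivity
  set R : ℝ := diam D with hR
  have hrR : r ≤ R := by
    rw [hr, ← dist_eq_norm]
    exact dist_le_diam_of_mem hD hx hy
  have hR0 : 0 < R := lt_of_lt_of_le hr0 hrR
  set L : ℝ := Real.log (R / r) with hL
  have hL0 : 0 ≤ L := Real.log_nonneg ((one_le_div hr0).2 hrR)
  set F : 𝔼 → ℝ≥0∞ := fun w => ENNReal.ofReal (‖y - w‖ ^ (-b)) with hF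
  set G : 𝔼 → ℝ≥0∞ := fun w => ENNReal.ofReal (‖w - x‖ ^ (b - d)) with hG
  set B₁ : Set 𝔼 := ball x (r / 2)
  set B₂ : Set 𝔼 := ball y (r / 2)
  set A : Set 𝔼 := closedBall x R \ ball x (r / 2) with hA
  have hcover : D ⊆ B₁ ∪ (B₂ ∪ A) := by
    intro w hw
    by_cases hw₁ : w ∈ B₁
    · exact Or.inl hw₁
    by_cases hw₂ : w ∈ B₂
    · exact Or.inr (Or.inl hw₂)
    refine Or.inr (Or.inr ⟨?_, hw₁⟩)
    rw [mem_closedBall, dist_comm]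
    exact dist_le_diam_of_mem hD hx hw
  -- region 1
  have h1 : ∫⁻ w in B₁, F w * G w ≤ ENNReal.ofReal (κR / b) := by
    have hstep : ∀ w ∈ B₁, F w * G w ≤ ENNReal.ofReal ((r / 2) ^ (-b)) * G w := by
      intro w hw
      have h1 : ‖w - x‖ < r / 2 := by simpa [B₁, mem_ball_iff_norm, dist_eq_norm] using hw
      have h2 : r ≤ ‖y - w‖ + ‖w - x‖ := by
        have := norm_sub_le_norm_sub_add_norm_sub y w x
        have hyx : ‖y - x‖ = r := by rw [hr]; exact norm_sub_rev y x
        linarith [hyx ▸ this]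
      have hyw : r / 2 ≤ ‖y - w‖ := by linarith
      exact mul_le_mul_left (ENNReal.ofReal_le_ofReal
        (rpow_le_rpow_of_nonpos hr2 hyw (by linarith))) _
    calc ∫⁻ w in B₁, F w * G w ≤ ∫⁻ w in B₁, ENNReal.ofReal ((r / 2) ^ (-b)) * G w :=
          setLIntegral_mono' measurableSet_ball hstep
      _ = ENNReal.ofReal ((r / 2) ^ (-b)) * ∫⁻ w in B₁, G w :=
          lintegral_const_mul' _ _ ENNReal.ofReal_ne_top
      _ = ENNReal.ofReal ((r / 2) ^ (-b)) * (kappa d * ENNReal.ofReal ((r / 2) ^ b / b)) := by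
          rw [hG, ball_rpow_int hd (by linarith) x hr2, show (d:ℝ) + (b - d) = b from by ring]
      _ = ENNReal.ofReal ((r / 2) ^ (-b) * (κR * ((r / 2) ^ b / b))) := by
          rw [hκ, ← ENNReal.ofReal_mul (by positivity), ← ENNReal.ofReal_mul (by positivity)]
      _ = ENNReal.ofReal (κR / b) := by
          congr 1
          have hsplit : (r/2) ^ (-b) * (r/2) ^ b = 1 := by
            rw [← Real.rpow_add hr2]; norm_num
          calc (r/2) ^ (-b) * (κR * ((r/2) ^ b / b))
              = κR * ((r/2) ^ (-b) * (r/2) ^ b) / b := by ring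
            _ = κR / b := by rw [hsplit, mul_one]
  -- region 2
  have h2 : ∫⁻ w in B₂, F w * G w ≤ ENNReal.ofReal (κR / ((d:ℝ) - b)) := by
    have hstep : ∀ w ∈ B₂, F w * G w ≤ F w * ENNReal.ofReal ((r / 2) ^ (b - d)) := by
      intro w hw
      have h1 : ‖w - y‖ < r / 2 := by simpa [B₂, mem_ball_iff_norm, dist_eq_norm] using hw
      have h2 : r ≤ ‖x - w‖ + ‖w - y‖ := by
        have := norm_sub_le_norm_sub_add_norm_sub x w y
        simpa [hr] using this
      have hwx : r / 2 ≤ ‖w - x‖ := by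
        have : ‖w - x‖ = ‖x - w‖ := norm_sub_rev w x
        linarith [this]
      exact mul_le_mul_right (ENNReal.ofReal_le_ofReal
        (rpow_le_rpow_of_nonpos hr2 hwx (by linarith))) _
    calc ∫⁻ w in B₂, F w * G w ≤ ∫⁻ w in B₂, F w * ENNReal.ofReal ((r / 2) ^ (b - d)) :=
          setLIntegral_mono' measurableSet_ball hstep
      _ = (∫⁻ w in B₂, F w) * ENNReal.ofReal ((r / 2) ^ (b - d)) :=
          lintegral_mul_const' _ _ ENNReal.ofReal_ne_top
      _ = (∫⁻ w in B₂, ENNReal.ofReal (‖w - y‖ ^ (-b))) * ENNReal.ofReal ((r / 2) ^ (b - d)) := by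
          congr 1
          exact lintegral_congr fun w => by rw [hF, norm_sub_rev]
      _ = kappa d * ENNReal.ofReal ((r / 2) ^ ((d:ℝ) - b) / ((d:ℝ) - b))
            * ENNReal.ofReal ((r / 2) ^ (b - d)) := by
          rw [ball_rpow_int hd (by linarith) y hr2, show (d:ℝ) + -b = (d:ℝ) - b from by ring]
      _ = ENNReal.ofReal (κR * ((r / 2) ^ ((d:ℝ) - b) / ((d:ℝ) - b)) * (r / 2) ^ (b - d)) := by
          rw [hκ, ← ENNReal.ofReal_mul hκR.le, ← ENNReal.ofReal_mul
            (mul_nonneg hκR.le (div_nonneg (Real.rpow_nonneg hr2.le _) (by linarith)))]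
      _ = ENNReal.ofReal (κR / ((d:ℝ) - b)) := by
          congr 1
          have hsplit : (r/2) ^ ((d:ℝ) - b) * (r/2) ^ (b - (d:ℝ)) = 1 := by
            rw [← Real.rpow_add hr2]; norm_num
          calc κR * ((r/2) ^ ((d:ℝ) - b) / ((d:ℝ) - b)) * (r/2) ^ (b - (d:ℝ))
              = κR * ((r/2) ^ ((d:ℝ) - b) * (r/2) ^ (b - (d:ℝ))) / ((d:ℝ) - b) := by ring
            _ = κR / ((d:ℝ) - b) := by rw [hsplit, mul_one]
  -- region 3
  have h3 : ∫⁻ w in A ∩ B₂ᶜ, F w * G w ≤ ENNReal.ofReal (4 ^ b * κR * (Real.log 2 + L)) := by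
    have hstep : ∀ w ∈ A ∩ B₂ᶜ, F w * G w
        ≤ ENNReal.ofReal (4 ^ b) * ENNReal.ofReal (‖w - x‖ ^ (-(d:ℝ))) := by
      intro w hw
      have hwx : r / 2 ≤ ‖w - x‖ := by
        have := hw.1.2
        simp only [mem_ball, not_lt, dist_eq_norm] at this
        exact this
      have hwx0 : 0 < ‖w - x‖ := lt_of_lt_of_le hr2 hwx
      have hyw : r / 2 ≤ ‖y - w‖ := by
        have h1 : ¬ ‖w - y‖ < r / 2 := by
          have := hw.2
          simpa [B₂, mem_ball, dist_eq_norm] using this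
        push_neg at h1
        calc r / 2 ≤ ‖w - y‖ := h1
          _ = ‖y - w‖ := norm_sub_rev w y
      have hq : ‖w - x‖ / 4 ≤ ‖y - w‖ := by
        by_cases hcase : ‖w - x‖ ≤ 2 * r
        · linarith
        · have htri : ‖x - w‖ ≤ ‖x - y‖ + ‖y - w‖ := norm_sub_le_norm_sub_add_norm_sub x y w
          have hxw : ‖x - w‖ = ‖w - x‖ := norm_sub_rev x w
          rw [← hr] at htri
          linarith
      have hFle : F w ≤ ENNReal.ofReal ((‖w - x‖ / 4) ^ (-b)) :=
        ENNReal.ofReal_le_ofReal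
          (rpow_le_rpow_of_nonpos (by positivity) hq (by linarith))
      have h4inv : ((4:ℝ) ^ (-b))⁻¹ = 4 ^ b := by
        rw [← Real.rpow_neg (by norm_num : (0:ℝ) ≤ 4), neg_neg]
      have hdiv : (‖w - x‖ / 4) ^ (-b) = ‖w - x‖ ^ (-b) * 4 ^ b := by
        rw [div_rpow (norm_nonneg _) (by norm_num : (0:ℝ) ≤ 4), div_eq_mul_inv, h4inv]
      calc F w * G w ≤ ENNReal.ofReal ((‖w - x‖ / 4) ^ (-b)) * G w :=
            mul_le_mul_left hFle _
        _ = ENNReal.ofReal (‖w - x‖ ^ (-b) * 4 ^ b * ‖w - x‖ ^ (b - (d:ℝ))) := by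
            simp only [hG]
            rw [hdiv, ← ENNReal.ofReal_mul (by positivity)]
        _ = ENNReal.ofReal (4 ^ b) * ENNReal.ofReal (‖w - x‖ ^ (-(d:ℝ))) := by
            rw [← ENNReal.ofReal_mul (by positivity)]
            congr 1
            rw [show ‖w - x‖ ^ (-b) * 4 ^ b * ‖w - x‖ ^ (b - (d:ℝ))
                = 4 ^ b * (‖w - x‖ ^ (-b) * ‖w - x‖ ^ (b - (d:ℝ))) from by ring,
              ← Real.rpow_add hwx0]
            congr 2
            ring
    have hmeasA : MeasurableSet (A ∩ B₂ᶜ) :=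
      ((measurableSet_closedBall.diff measurableSet_ball).inter measurableSet_ball.compl)
    calc ∫⁻ w in A ∩ B₂ᶜ, F w * G w
        ≤ ∫⁻ w in A ∩ B₂ᶜ, ENNReal.ofReal (4 ^ b) * ENNReal.ofReal (‖w - x‖ ^ (-(d:ℝ))) :=
          setLIntegral_mono' hmeasA hstep
      _ ≤ ∫⁻ w in A, ENNReal.ofReal (4 ^ b) * ENNReal.ofReal (‖w - x‖ ^ (-(d:ℝ))) :=
          lintegral_mono_set inter_subset_left
      _ = ENNReal.ofReal (4 ^ b) * ∫⁻ w in A, ENNReal.ofReal (‖w - x‖ ^ (-(d:ℝ))) :=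
          lintegral_const_mul' _ _ ENNReal.ofReal_ne_top
      _ = ENNReal.ofReal (4 ^ b) * (kappa d * ENNReal.ofReal (Real.log (R / (r / 2)))) := by
          rw [hA, annulus_int hd x hr2 (by linarith)]
      _ = ENNReal.ofReal (4 ^ b * κR * (Real.log 2 + L)) := by
          have hRr : R / (r / 2) = 2 * (R / r) := by
            field_simp
          rw [hRr, Real.log_mul (by norm_num) (ne_of_gt (div_pos hR0 hr0)), hκ, ← hL,
            ← ENNReal.ofReal_mul hκR.le,
            ← ENNReal.ofReal_mul (by positivity : (0:ℝ) ≤ (4:ℝ) ^ b)]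
          congr 1
          have hlog2 : (0:ℝ) ≤ Real.log 2 := Real.log_nonneg (by norm_num)
          ring
  -- assembly
  have hlog2 : (0:ℝ) ≤ Real.log 2 := Real.log_nonneg (by norm_num)
  have hcover' : D ⊆ B₁ ∪ (B₂ ∪ A ∩ B₂ᶜ) := by
    intro w hw
    by_cases hw₁ : w ∈ B₁
    · exact Or.inl hw₁
    by_cases hw₂ : w ∈ B₂
    · exact Or.inr (Or.inl hw₂)
    refine Or.inr (Or.inr ⟨⟨?_, hw₁⟩, hw₂⟩)
    rw [mem_closedBall, dist_comm]
    exact dist_le_diam_of_mem hD hx hw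
  have hnn1 : (0:ℝ) ≤ κR / b := by positivity
  have hnn2 : (0:ℝ) ≤ κR / ((d:ℝ) - b) := (div_pos hκR (by linarith)).le
  have hnn3 : (0:ℝ) ≤ 4 ^ b * κR * (Real.log 2 + L) := by positivity
  calc ∫⁻ w in D, F w * G w ≤ ∫⁻ w in B₁ ∪ (B₂ ∪ A ∩ B₂ᶜ), F w * G w :=
        lintegral_mono_set hcover'
    _ ≤ (∫⁻ w in B₁, F w * G w) + ∫⁻ w in B₂ ∪ A ∩ B₂ᶜ, F w * G w := lintegral_union_le _ _ _
    _ ≤ (∫⁻ w in B₁, F w * G w) + ((∫⁻ w in B₂, F w * G w) + ∫⁻ w in A ∩ B₂ᶜ, F w * G w) :=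
        add_le_add_right (lintegral_union_le _ _ _) _
    _ ≤ ENNReal.ofReal (κR / b) + (ENNReal.ofReal (κR / ((d:ℝ) - b))
          + ENNReal.ofReal (4 ^ b * κR * (Real.log 2 + L))) :=
        add_le_add h1 (add_le_add h2 h3)
    _ = ENNReal.ofReal (κR / b + (κR / ((d:ℝ) - b) + 4 ^ b * κR * (Real.log 2 + L))) := by
        rw [← ENNReal.ofReal_add hnn2 hnn3, ← ENNReal.ofReal_add hnn1 (by positivity)]
    _ ≤ ENNReal.ofReal ((c₁ + c₂) * (1 + L)) := by
        apply ENNReal.ofReal_le_ofReal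
        rw [hc₁, hc₂]
        nlinarith [mul_nonneg (mul_nonneg (Real.rpow_nonneg (by norm_num : (0:ℝ) ≤ 4) b) hκR.le) hL0,
          mul_nonneg hκR.le hL0, mul_nonneg hnn1 hL0, mul_nonneg hnn2 hL0]
end Euclid

end DoubleRiesz

end

open DoubleRiesz in
/-- Lemma (Riesz-type double integral, case `a + ϱ + b = 0`): for `d ≥ 1`, `a, b > 0`,
`ϱ > -d` with `a + ϱ + b = 0`, there is a constant `C = C(d,a,b,ϱ)` such that for every
nonempty bounded open `D ⊂ ℝ^d` and all `x ≠ y` in `D`,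
`∫_D ∫_D |y-z|^{a-d} |z-w|^ϱ |w-x|^{b-d} dz dw ≤ C (1 + log(diam D / |x-y|))`. -/
theorem double_riesz_integral_zero (d : ℕ) (hd : 1 ≤ d) (a b ϱ : ℝ)
    (ha : 0 < a) (hb : 0 < b) (hϱ : -(d : ℝ) < ϱ) (hsum : a + ϱ + b = 0) :
    ∃ C : ℝ, 0 < C ∧
      ∀ D : Set (EuclideanSpace ℝ (Fin d)), D.Nonempty → IsOpen D →
        Bornology.IsBounded D →
        ∀ x ∈ D, ∀ y ∈ D, x ≠ y →
          (∫⁻ w in D, ∫⁻ z in D,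
              ENNReal.ofReal (‖y - z‖ ^ (a - (d : ℝ)) * ‖z - w‖ ^ ϱ *
                ‖w - x‖ ^ (b - (d : ℝ)))) ≤
            ENNReal.ofReal (C * (1 + Real.log (diam D / ‖x - y‖))) := by
  have hd0 : 0 < d := hd
  have hdR : (0:ℝ) < d := by exact_mod_cast hd0
  have hϱ0 : ϱ < 0 := by linarith
  have hbd : b < (d:ℝ) := by linarith
  obtain ⟨K, hK0, hKbd⟩ := comp_rpow hd0 (α := a) (β := ϱ + d) ha (by linarith) (by linarith)
  obtain ⟨C, hC0, hCbd⟩ := outer_log hd0 hb hbd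
  refine ⟨K * C, mul_pos hK0 hC0, fun D _ _ hbdd x hx y hy hxy => ?_⟩
  have hcomp : ∀ w : EuclideanSpace ℝ (Fin d), y ≠ w →
      (∫⁻ z : EuclideanSpace ℝ (Fin d),
          ENNReal.ofReal (‖y - z‖ ^ (a - (d:ℝ))) * ENNReal.ofReal (‖z - w‖ ^ ϱ))
        ≤ ENNReal.ofReal K * ENNReal.ofReal (‖y - w‖ ^ (-b)) := by
    intro w hw
    have h := hKbd y w hw
    rw [show ϱ + (d:ℝ) - d = ϱ from by ring,
      show a + (ϱ + (d:ℝ)) - d = -b from by linarith] at h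
    exact h
  haveI : Nontrivial (EuclideanSpace ℝ (Fin d)) := Module.nontrivial_of_finrank_pos
    (R := ℝ) (by rw [finrank_euclideanSpace_fin]; exact hd0)
  have hae : ∀ᵐ w ∂(volume.restrict D), y ≠ w := by
    apply ae_restrict_of_ae
    have hset : {w : EuclideanSpace ℝ (Fin d) | ¬ y ≠ w} = {y} := by
      ext w; simp [eq_comm]
    rw [ae_iff, hset]
    exact measure_singleton y
  calc ∫⁻ w in D, ∫⁻ z in D,
        ENNReal.ofReal (‖y - z‖ ^ (a - (d:ℝ)) * ‖z - w‖ ^ ϱ * ‖w - x‖ ^ (b - (d:ℝ)))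
      = ∫⁻ w in D, (∫⁻ z in D,
          ENNReal.ofReal (‖y - z‖ ^ (a - (d:ℝ))) * ENNReal.ofReal (‖z - w‖ ^ ϱ))
            * ENNReal.ofReal (‖w - x‖ ^ (b - (d:ℝ))) := by
        refine lintegral_congr fun w => ?_
        rw [← lintegral_mul_const' _ _ ENNReal.ofReal_ne_top]
        refine lintegral_congr fun z => ?_
        rw [ENNReal.ofReal_mul (by positivity), ENNReal.ofReal_mul (by positivity)]
    _ ≤ ∫⁻ w in D, ENNReal.ofReal K *
          (ENNReal.ofReal (‖y - w‖ ^ (-b)) * ENNReal.ofReal (‖w - x‖ ^ (b - (d:ℝ)))) := by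
        refine lintegral_mono_ae (hae.mono fun w hw => ?_)
        calc (∫⁻ z in D, ENNReal.ofReal (‖y - z‖ ^ (a - (d:ℝ)))
              * ENNReal.ofReal (‖z - w‖ ^ ϱ)) * ENNReal.ofReal (‖w - x‖ ^ (b - (d:ℝ)))
            ≤ (∫⁻ z : EuclideanSpace ℝ (Fin d), ENNReal.ofReal (‖y - z‖ ^ (a - (d:ℝ)))
              * ENNReal.ofReal (‖z - w‖ ^ ϱ)) * ENNReal.ofReal (‖w - x‖ ^ (b - (d:ℝ))) :=
              mul_le_mul_left (setLIntegral_le_lintegral _ _) _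
          _ ≤ ENNReal.ofReal K * ENNReal.ofReal (‖y - w‖ ^ (-b))
              * ENNReal.ofReal (‖w - x‖ ^ (b - (d:ℝ))) :=
              mul_le_mul_left (hcomp w hw) _
          _ = ENNReal.ofReal K * (ENNReal.ofReal (‖y - w‖ ^ (-b))
              * ENNReal.ofReal (‖w - x‖ ^ (b - (d:ℝ)))) := mul_assoc _ _ _
    _ = ENNReal.ofReal K * ∫⁻ w in D,
          ENNReal.ofReal (‖y - w‖ ^ (-b)) * ENNReal.ofReal (‖w - x‖ ^ (b - (d:ℝ))) :=
        lintegral_const_mul' _ _ ENNReal.ofReal_ne_top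
    _ ≤ ENNReal.ofReal K * ENNReal.ofReal (C * (1 + Real.log (diam D / ‖x - y‖))) :=
        mul_le_mul_right (hCbd D hbdd x hx y hy hxy) _
    _ = ENNReal.ofReal (K * C * (1 + Real.log (diam D / ‖x - y‖))) := by
        rw [← ENNReal.ofReal_mul hK0.le]
        congr 1
        ring
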